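/- arXiv:2307.11448 — 3 statements merged into one kernel-verified Lean document; each statement's English description precedes it below -/
import Mathlib

section
/- Let γ ∈ [1/2, 1) and β ∈ (0, 1]. Then for all real numbers x > 0 and y ≥ 0 one has |x^γ − y^γ| ≤ 2 · x^{−(1−γ)β} · |x − y|^{β + γ(1−β)}. -/
/-- Subadditivity of `rpow` for exponent in `[0,1]`, real version. -/
lemma rpow_add_le_add_rpow_real {p : ℝ} (a b : ℝ) (ha : 0 ≤ a) (hb : 0 ≤ b)
    (hp0 : 0 ≤ p) (hp1 : p ≤ 1) : (a + b) ^ p ≤ a ^ p + b ^ p := by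
  have h := NNReal.rpow_add_le_add_rpow a.toNNReal b.toNNReal hp0 hp1
  have h' := NNReal.coe_le_coe.2 h
  push_cast [NNReal.coe_rpow] at h'
  rwa [Real.coe_toNNReal _ ha, Real.coe_toNNReal _ hb] at h'

/-- Bernoulli-type: for `0 < γ ≤ 1`, `0 < b ≤ a`, `a^γ - b^γ ≤ b^(γ-1) * (a-b)`. -/
lemma bern_aux (γ : ℝ) (hγ0 : 0 < γ) (hγ : γ ≤ 1) {a b : ℝ} (hb : 0 < b) (hab : b ≤ a) :
    a ^ γ - b ^ γ ≤ b ^ (γ - 1) * (a - b) := by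
  have ha : 0 < a := hb.trans_le hab
  have h1 : (1:ℝ) ≤ a / b := (one_le_div hb).mpr hab
  have h2 : (a / b) ^ γ ≤ (a / b) ^ (1:ℝ) := Real.rpow_le_rpow_of_exponent_le h1 hγ
  rw [Real.rpow_one, Real.div_rpow ha.le hb.le,
    div_le_div_iff₀ (Real.rpow_pos_of_pos hb γ) hb] at h2
  have hbγ : b ^ (γ - 1) * b = b ^ γ := by
    rw [← Real.rpow_add_one hb.ne' (γ - 1)]; ring_nf
  have hbγa : b ^ (γ - 1) * a * b = b ^ γ * a := by
    rw [← hbγ]; ring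
  nlinarith [Real.rpow_pos_of_pos hb γ, Real.rpow_pos_of_pos hb (γ - 1)]

theorem stmt_1 (γ β : ℝ) (hγ1 : 1/2 ≤ γ) (hγ2 : γ < 1)
    (hβ1 : 0 < β) (hβ2 : β ≤ 1)
    (x y : ℝ) (hx : 0 < x) (hy : 0 ≤ y) :
    |x ^ γ - y ^ γ| ≤ 2 * x ^ (-(1 - γ) * β) * |x - y| ^ (β + γ * (1 - β)) := by
  have hγ0 : 0 < γ := lt_of_lt_of_le (by norm_num) hγ1
  set d := |x - y| with hd
  have hd0 : 0 ≤ d := abs_nonneg _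
  by_cases hxy : x = y
  · subst hxy
    have h0 : |x ^ γ - x ^ γ| = 0 := by simp
    rw [h0]
    positivity
  have hdpos : 0 < d := abs_pos.mpr (sub_ne_zero.mpr hxy)
  have hxg1 : 0 < x ^ (γ - 1) := Real.rpow_pos_of_pos hx _
  -- bound B : |x^γ - y^γ| ≤ d^γ
  have hB : |x ^ γ - y ^ γ| ≤ d ^ γ := by
    rcases le_total y x with h | h
    · have hxyd : d = x - y := abs_of_nonneg (sub_nonneg.mpr h)
      have h1 : x ^ γ ≤ (x - y) ^ γ + y ^ γ := by
        have := rpow_add_le_add_rpow_real (x - y) y (sub_nonneg.mpr h) hy hγ0.le hγ2.le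
        simpa using this
      have hyx : y ^ γ ≤ x ^ γ := Real.rpow_le_rpow hy h hγ0.le
      rw [abs_of_nonneg (sub_nonneg.mpr hyx), hxyd]
      linarith
    · have hxyd : d = y - x := by rw [hd, abs_sub_comm]; exact abs_of_nonneg (sub_nonneg.mpr h)
      have h1 : y ^ γ ≤ (y - x) ^ γ + x ^ γ := by
        have := rpow_add_le_add_rpow_real (y - x) x (sub_nonneg.mpr h) hx.le hγ0.le hγ2.le
        simpa using this
      have hyx : x ^ γ ≤ y ^ γ := Real.rpow_le_rpow hx.le h hγ0.le
      rw [abs_of_nonpos (sub_nonpos.mpr hyx), hxyd]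
      linarith
  -- bound A : |x^γ - y^γ| ≤ 2 * x^(γ-1) * d
  have hA : |x ^ γ - y ^ γ| ≤ 2 * x ^ (γ - 1) * d := by
    rcases le_total x y with h | h
    · -- y ≥ x : Bernoulli at base x
      have hxyd : d = y - x := by rw [hd, abs_sub_comm]; exact abs_of_nonneg (sub_nonneg.mpr h)
      have h1 := bern_aux γ hγ0 hγ2.le hx h
      have hyx : x ^ γ ≤ y ^ γ := Real.rpow_le_rpow hx.le h hγ0.le
      rw [abs_of_nonpos (sub_nonpos.mpr hyx), hxyd]
      nlinarith
    · rcases le_total y (x / 2) with h2 | h2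
      · -- y small : trivial bound
        have hxyd : d = x - y := abs_of_nonneg (sub_nonneg.mpr h)
        have hx2d : x ≤ 2 * d := by rw [hxyd]; linarith
        have hxγ : x ^ γ = x ^ (γ - 1) * x := by
          rw [← Real.rpow_add_one hx.ne' (γ - 1)]; ring_nf
        have hyγ : 0 ≤ y ^ γ := Real.rpow_nonneg hy γ
        have hyx : y ^ γ ≤ x ^ γ := Real.rpow_le_rpow hy h hγ0.le
        rw [abs_of_nonneg (sub_nonneg.mpr hyx)]
        calc x ^ γ - y ^ γ ≤ x ^ γ := by linarith
          _ = x ^ (γ - 1) * x := hxγ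
          _ ≤ x ^ (γ - 1) * (2 * d) := by
              exact mul_le_mul_of_nonneg_left hx2d hxg1.le
          _ = 2 * x ^ (γ - 1) * d := by ring
      · -- x/2 ≤ y ≤ x : Bernoulli at base y
        have hy2 : 0 < y := lt_of_lt_of_le (by linarith) h2
        have hxyd : d = x - y := abs_of_nonneg (sub_nonneg.mpr h)
        have h1 := bern_aux γ hγ0 hγ2.le hy2 h
        have hyg : y ^ (γ - 1) ≤ (x / 2) ^ (γ - 1) :=
          Real.rpow_le_rpow_of_nonpos (by linarith) h2 (by linarith)
        have hx2 : (x / 2) ^ (γ - 1) ≤ 2 * x ^ (γ - 1) := by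
          have : (x / 2) ^ (γ - 1) = x ^ (γ - 1) * (2:ℝ) ^ (1 - γ) := by
            rw [div_eq_mul_inv, Real.mul_rpow hx.le (by norm_num),
              Real.inv_rpow (by norm_num : (0:ℝ) ≤ 2),
              ← Real.rpow_neg (by norm_num : (0:ℝ) ≤ 2)]
            ring_nf
          rw [this]
          have h2le : (2:ℝ) ^ (1 - γ) ≤ 2 := by
            calc (2:ℝ) ^ (1 - γ) ≤ (2:ℝ) ^ (1:ℝ) :=
                  Real.rpow_le_rpow_of_exponent_le (by norm_num) (by linarith)
              _ = 2 := Real.rpow_one 2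
          nlinarith
        have hyx : y ^ γ ≤ x ^ γ := Real.rpow_le_rpow hy2.le h hγ0.le
        rw [abs_of_nonneg (sub_nonneg.mpr hyx), hxyd]
        have hylow : y ^ (γ - 1) * (x - y) ≤ 2 * x ^ (γ - 1) * (x - y) := by
          apply mul_le_mul_of_nonneg_right _ (by linarith)
          linarith
        linarith
  -- combine via interpolation
  set D := |x ^ γ - y ^ γ| with hD
  have hD0 : 0 ≤ D := abs_nonneg _
  rcases eq_or_lt_of_le hD0 with h0 | h0
  · rw [← h0]; positivity
  have key : D = D ^ β * D ^ (1 - β) := by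
    rw [← Real.rpow_add h0, add_sub_cancel, Real.rpow_one]
  have hAβ : D ^ β ≤ (2 * x ^ (γ - 1) * d) ^ β := Real.rpow_le_rpow hD0 hA hβ1.le
  have hBβ : D ^ (1 - β) ≤ (d ^ γ) ^ (1 - β) :=
    Real.rpow_le_rpow hD0 hB (by linarith)
  have hexp1 : (d ^ γ) ^ (1 - β) = d ^ (γ * (1 - β)) := by
    rw [← Real.rpow_mul hd0]
  have hAβ' : (2 * x ^ (γ - 1) * d) ^ β = 2 ^ β * x ^ ((γ - 1) * β) * d ^ β := by
    rw [Real.mul_rpow (by positivity) hd0, Real.mul_rpow (by norm_num) hxg1.le,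
      ← Real.rpow_mul hx.le]
  have h2β : (2:ℝ) ^ β ≤ 2 := by
    calc (2:ℝ) ^ β ≤ (2:ℝ) ^ (1:ℝ) := Real.rpow_le_rpow_of_exponent_le (by norm_num) hβ2
      _ = 2 := Real.rpow_one 2
  have hxeq : x ^ ((γ - 1) * β) = x ^ (-(1 - γ) * β) := by ring_nf
  have hdd : d ^ β * d ^ (γ * (1 - β)) = d ^ (β + γ * (1 - β)) := by
    rw [← Real.rpow_add hdpos]
  calc D = D ^ β * D ^ (1 - β) := key
    _ ≤ (2 * x ^ (γ - 1) * d) ^ β * (d ^ γ) ^ (1 - β) := by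
        apply mul_le_mul hAβ hBβ (Real.rpow_nonneg hD0 _) (by positivity)
    _ = 2 ^ β * x ^ (-(1 - γ) * β) * (d ^ β * d ^ (γ * (1 - β))) := by
        rw [hAβ', hexp1, hxeq]; ring
    _ = 2 ^ β * x ^ (-(1 - γ) * β) * d ^ (β + γ * (1 - β)) := by rw [hdd]
    _ ≤ 2 * x ^ (-(1 - γ) * β) * d ^ (β + γ * (1 - β)) := by
        apply mul_le_mul_of_nonneg_right _ (Real.rpow_nonneg hd0 _)
        apply mul_le_mul_of_nonneg_right h2β (Real.rpow_pos_of_pos hx _).le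
end

section
/- Let γ ∈ [1/2, 1). Then for all real numbers x ≥ 0 and y ≥ 0 one has |x^γ − y^γ| · (x^{1−γ} + y^{1−γ}) ≤ 2 · |x − y|. -/
theorem stmt_2 (γ : ℝ) (hγ1 : 1/2 ≤ γ) (hγ2 : γ < 1)
    (x y : ℝ) (hx : 0 ≤ x) (hy : 0 ≤ y) :
    |x ^ γ - y ^ γ| * (x ^ (1 - γ) + y ^ (1 - γ)) ≤ 2 * |x - y| := by
  have hγ0 : (0:ℝ) ≤ γ := by linarith
  have h1γ : (0:ℝ) ≤ 1 - γ := by linarith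
  have key : ∀ a b : ℝ, 0 ≤ b → b ≤ a →
      (a ^ γ - b ^ γ) * (a ^ (1 - γ) + b ^ (1 - γ)) ≤ 2 * (a - b) := by
    intro a b hb hba
    have ha : 0 ≤ a := hb.trans hba
    have haa : a ^ γ * a ^ (1 - γ) = a := by
      rw [← Real.rpow_add' ha (by norm_num)]; norm_num
    have hbb : b ^ γ * b ^ (1 - γ) = b := by
      rw [← Real.rpow_add' hb (by norm_num)]; norm_num
    have hmono : b ^ (1 - γ) ≤ a ^ (1 - γ) := Real.rpow_le_rpow hb hba h1γ
    have h1 : a ^ γ * b ^ (1 - γ) ≤ a := by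
      calc a ^ γ * b ^ (1 - γ) ≤ a ^ γ * a ^ (1 - γ) :=
            mul_le_mul_of_nonneg_left hmono (Real.rpow_nonneg ha γ)
        _ = a := haa
    have h2 : b ≤ b ^ γ * a ^ (1 - γ) := by
      calc b = b ^ γ * b ^ (1 - γ) := hbb.symm
        _ ≤ b ^ γ * a ^ (1 - γ) :=
            mul_le_mul_of_nonneg_left hmono (Real.rpow_nonneg hb γ)
    nlinarith [haa, hbb, h1, h2]
  rcases le_total y x with h | h
  · rw [abs_of_nonneg (sub_nonneg.2 h),
      abs_of_nonneg (sub_nonneg.2 (Real.rpow_le_rpow hy h hγ0))]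
    exact key x y hy h
  · rw [abs_sub_comm, abs_sub_comm x y,
      abs_of_nonneg (sub_nonneg.2 (Real.rpow_le_rpow hx h hγ0)),
      abs_of_nonneg (sub_nonneg.2 h)]
    linarith [key y x hx h]
end

section
/- Let γ ∈ [1/2, 1). Then for every real number z ≥ 1 one has (z^γ − 1) · (z^{1−γ} + 1) ≤ 2(z − 1). -/
theorem stmt_3 (γ : ℝ) (hγ1 : 1/2 ≤ γ) (hγ2 : γ < 1)
    (z : ℝ) (hz : 1 ≤ z) :
    (z ^ γ - 1) * (z ^ (1 - γ) + 1) ≤ 2 * (z - 1) := by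
  have hz0 : (0:ℝ) < z := by linarith
  have h1 : z ^ γ * z ^ (1-γ) = z := by
    rw [← Real.rpow_add hz0]; simp
  have h2 : 1 ≤ z ^ (1-γ) := Real.one_le_rpow hz (by linarith)
  have h3 : 1 ≤ z ^ γ := Real.one_le_rpow hz (by linarith)
  nlinarith
end
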